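/- Let μ be a finite Borel measure on ℝⁿ with μ(ℝⁿ) = 1 belonging to K₁(ℝⁿ), let l ≥ 1 be an integer, and define the signed measure μ' = Σ_{k=1}^{l} (−1)^{k+1} C(l, l−k) μ^{(k)}, where μ^{(k)} denotes the k-fold convolution of μ with itself and C(·,·) is the binomial coefficient. Then 1 − μ̂'(ξ) = (1 − μ̂(ξ))^l for all ξ, and consequently μ' ∈ K_l(ℝⁿ): there are constants 0 < c₁ ≤ c₂ such that c₁ · min{1,|ξ|^{2l}} ≤ |1 − μ̂'(ξ)| ≤ c₂ · min{1,|ξ|^{2l}} for all ξ ∈ ℝⁿ. -/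

import Mathlib

/-! The Fourier transform turns the convolution power `μ^{(k)}` into `μ̂ ^ k`, so by the binomial
theorem `1 - μ̂' = (1 - μ̂) ^ l`; raising the two-sided bound `|1 - μ̂| ≍ min 1 |ξ|²` to the `l`-th
power gives `|1 - μ̂'| ≍ (min 1 |ξ|²) ^ l = min 1 |ξ|^{2l}`. -/

open MeasureTheory Real Set

/-- The Fourier transform `f̂(ξ) = ∫ f(x) e^{-i ξ·x} dx` on `ℝⁿ` (absolutely convergent
for integrable functions). -/
noncomputable def fourierIntegralE {n : ℕ} (f : EuclideanSpace ℝ (Fin n) → ℂ)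
    (ξ : EuclideanSpace ℝ (Fin n)) : ℂ :=
  ∫ x : EuclideanSpace ℝ (Fin n), Complex.exp (-(Complex.I * ((inner ℝ ξ x : ℝ) : ℂ))) * f x

/-- The Fourier transform `μ̂(ξ) = ∫ e^{-i ξ·x} dμ(x)` of a (positive) Borel measure. -/
noncomputable def measureFourier {n : ℕ} (μ : Measure (EuclideanSpace ℝ (Fin n)))
    (ξ : EuclideanSpace ℝ (Fin n)) : ℂ :=
  ∫ x, Complex.exp (-(Complex.I * ((inner ℝ ξ x : ℝ) : ℂ))) ∂μ


/-- The `k`-fold convolution iterate: `convIter μ 0 = μ` and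
`convIter μ k = μ^{(k+1)}`, so that `μ^{(k)} = convIter μ (k-1)` for `k ≥ 1`. -/
noncomputable def convIter {n : ℕ} (μ : Measure (EuclideanSpace ℝ (Fin n))) :
    ℕ → Measure (EuclideanSpace ℝ (Fin n))
  | 0 => μ
  | k + 1 => Measure.conv (convIter μ k) μ

/-- The Fourier transform of the signed measure
`μ' = Σ_{k=1}^{l} (−1)^{k+1} C(l, l−k) μ^{(k)}` (defined by linearity). -/
noncomputable def binomialIterateFourier {n : ℕ} (μ : Measure (EuclideanSpace ℝ (Fin n)))
    (l : ℕ) (ξ : EuclideanSpace ℝ (Fin n)) : ℂ :=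
  ∑ k ∈ Finset.Icc 1 l,
    ((-1 : ℂ)) ^ (k + 1) * (Nat.choose l (l - k) : ℂ) * measureFourier (convIter μ (k - 1)) ξ

lemma measureFourier_eq_charFun {n : ℕ} (μ : Measure (EuclideanSpace ℝ (Fin n)))
    (ξ : EuclideanSpace ℝ (Fin n)) : measureFourier μ ξ = charFun μ (-ξ) := by
  simp only [measureFourier, charFun_apply, inner_neg_right, real_inner_comm ξ]
  congr 1 with x
  push_cast
  ring_nf

lemma measureFourier_conv {n : ℕ} (μ ν : Measure (EuclideanSpace ℝ (Fin n)))
    [IsFiniteMeasure μ] [IsFiniteMeasure ν] (ξ : EuclideanSpace ℝ (Fin n)) :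
    measureFourier (μ.conv ν) ξ = measureFourier μ ξ * measureFourier ν ξ := by
  simp only [measureFourier_eq_charFun]
  exact charFun_conv _

instance isFiniteMeasure_convIter {n : ℕ} (μ : Measure (EuclideanSpace ℝ (Fin n)))
    [IsFiniteMeasure μ] (k : ℕ) : IsFiniteMeasure (convIter μ k) := by
  induction k with
  | zero => exact ‹_›
  | succ k ih => exact Measure.finite_of_finite_conv _ _

lemma measureFourier_convIter {n : ℕ} (μ : Measure (EuclideanSpace ℝ (Fin n)))
    [IsFiniteMeasure μ] (k : ℕ) (ξ : EuclideanSpace ℝ (Fin n)) :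
    measureFourier (convIter μ k) ξ = measureFourier μ ξ ^ (k + 1) := by
  induction k with
  | zero => rw [convIter, zero_add, pow_one]
  | succ k ih => rw [convIter, measureFourier_conv, ih, ← pow_succ]

lemma one_sub_sum_Icc_choose_mul_pow {R : Type*} [CommRing R] (z : R) (l : ℕ) :
    1 - ∑ k ∈ Finset.Icc 1 l, (-1) ^ (k + 1) * (l.choose k : R) * z ^ k = (1 - z) ^ l := by
  rw [sub_eq_neg_add 1 z, add_pow, Finset.range_eq_Ico,
    Finset.sum_eq_sum_Ico_succ_bot (Nat.succ_pos l), zero_add, Nat.succ_eq_add_one,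
    ← Order.succ_eq_add_one, Finset.Ico_succ_right_eq_Icc, sub_eq_add_neg, ← Finset.sum_neg_distrib]
  simp only [pow_zero, one_pow, Nat.choose_zero_right, Nat.cast_one, mul_one, neg_pow z, pow_succ]
  congr 1
  exact Finset.sum_congr rfl fun k _ => by ring

lemma one_sub_binomialIterateFourier {n : ℕ} (μ : Measure (EuclideanSpace ℝ (Fin n)))
    [IsFiniteMeasure μ] (l : ℕ) (ξ : EuclideanSpace ℝ (Fin n)) :
    1 - binomialIterateFourier μ l ξ = (1 - measureFourier μ ξ) ^ l := by
  rw [← one_sub_sum_Icc_choose_mul_pow, binomialIterateFourier]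
  congr 1
  refine Finset.sum_congr rfl fun k hk => ?_
  obtain ⟨hk1, hkl⟩ := Finset.mem_Icc.mp hk
  rw [measureFourier_convIter, Nat.choose_symm hkl, Nat.sub_add_cancel hk1]

lemma min_one_pow {R : Type*} [Semiring R] [LinearOrder R] [IsOrderedRing R] {a : R}
    (ha : 0 ≤ a) (l : ℕ) : min 1 a ^ l = min 1 (a ^ l) := by
  rcases le_total a 1 with h | h
  · rw [min_eq_right h, min_eq_right (pow_le_one₀ ha h)]
  · rw [min_eq_left h, min_eq_left (one_le_pow₀ h), one_pow]

theorem binomial_iterate_mem_Kl_general (n : ℕ) (μ : Measure (EuclideanSpace ℝ (Fin n)))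
    [IsFiniteMeasure μ]
    (hK : ∃ b₁ b₂ : ℝ, 0 < b₁ ∧ b₁ ≤ b₂ ∧
      ∀ ξ : EuclideanSpace ℝ (Fin n),
        b₁ * min 1 (‖ξ‖ ^ 2) ≤ ‖1 - measureFourier μ ξ‖ ∧
          ‖1 - measureFourier μ ξ‖ ≤ b₂ * min 1 (‖ξ‖ ^ 2))
    (l : ℕ) :
    (∀ ξ : EuclideanSpace ℝ (Fin n),
        1 - binomialIterateFourier μ l ξ = (1 - measureFourier μ ξ) ^ l) ∧
      ∃ c₁ c₂ : ℝ, 0 < c₁ ∧ c₁ ≤ c₂ ∧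
        ∀ ξ : EuclideanSpace ℝ (Fin n),
          c₁ * min 1 (‖ξ‖ ^ (2 * l)) ≤ ‖1 - binomialIterateFourier μ l ξ‖ ∧
            ‖1 - binomialIterateFourier μ l ξ‖ ≤ c₂ * min 1 (‖ξ‖ ^ (2 * l)) := by
  obtain ⟨b₁, b₂, hb₁, hb₁₂, hb⟩ := hK
  refine ⟨one_sub_binomialIterateFourier μ l, b₁ ^ l, b₂ ^ l, pow_pos hb₁ l,
    pow_le_pow_left₀ hb₁.le hb₁₂ l, fun ξ => ?_⟩
  have hnorm : ‖1 - binomialIterateFourier μ l ξ‖ = ‖1 - measureFourier μ ξ‖ ^ l := by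
    rw [one_sub_binomialIterateFourier, norm_pow]
  have hmin : min 1 (‖ξ‖ ^ (2 * l)) = min 1 (‖ξ‖ ^ 2) ^ l := by
    rw [min_one_pow (by positivity), pow_mul]
  rw [hnorm, hmin, ← mul_pow, ← mul_pow]
  exact ⟨pow_le_pow_left₀ (by positivity) (hb ξ).1 l,
    pow_le_pow_left₀ (norm_nonneg _) (hb ξ).2 l⟩

/-- if `μ` is a finite Borel measure with `μ(ℝⁿ) = 1` lying in `K₁(ℝⁿ)`
and `μ' = Σ_{k=1}^{l} (−1)^{k+1} C(l,l−k) μ^{(k)}`, then `1 − μ̂'(ξ) = (1 − μ̂(ξ))^l`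
and `μ' ∈ K_l(ℝⁿ)`: `|1 − μ̂'(ξ)| ≍ min{1,|ξ|^{2l}}`. -/
theorem binomial_iterate_mem_Kl (n : ℕ) (μ : Measure (EuclideanSpace ℝ (Fin n)))
    [IsFiniteMeasure μ] (hmass : μ Set.univ = 1)
    (hK : ∃ b₁ b₂ : ℝ, 0 < b₁ ∧ b₁ ≤ b₂ ∧
      ∀ ξ : EuclideanSpace ℝ (Fin n),
        b₁ * min 1 (‖ξ‖ ^ 2) ≤ ‖1 - measureFourier μ ξ‖ ∧
          ‖1 - measureFourier μ ξ‖ ≤ b₂ * min 1 (‖ξ‖ ^ 2))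
    (l : ℕ) (hl : 1 ≤ l) :
    (∀ ξ : EuclideanSpace ℝ (Fin n),
        1 - binomialIterateFourier μ l ξ = (1 - measureFourier μ ξ) ^ l) ∧
      ∃ c₁ c₂ : ℝ, 0 < c₁ ∧ c₁ ≤ c₂ ∧
        ∀ ξ : EuclideanSpace ℝ (Fin n),
          c₁ * min 1 (‖ξ‖ ^ (2 * l)) ≤ ‖1 - binomialIterateFourier μ l ξ‖ ∧
            ‖1 - binomialIterateFourier μ l ξ‖ ≤ c₂ * min 1 (‖ξ‖ ^ (2 * l)) :=
  binomial_iterate_mem_Kl_general n μ hK l
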